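/- Let G be a parity game with node set V, in which no cycle lies entirely within V_0 or entirely within V_1. Construct G' by adding nodes ⊤ and w, with p(⊤) smaller than all other priorities, p(w) an even number larger than all other priorities, an edge from every node in V_0 to ⊤, from every node in V_1 to w, from w to ⊤, and the self-loop on ⊤. Then G' is a sink parity game: player 0 has an admissible strategy (always move to ⊤) and player 1 has an admissible strategy (always move to w). -/
import Mathlib


structure PGame (V : Type) where
  E : V → V → Prop
  isP0 : V → Bool
  p : V → ℤ

namespace PGame

variable {V : Type}

/-- A valid positional strategy for player 0: at every player-0 node it follows an edge. -/
def Strat0Valid (G : PGame V) (σ : V → V) : Prop := ∀ v, G.isP0 v = true → G.E v (σ v)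

/-- A valid positional strategy for player 1. -/
def Strat1Valid (G : PGame V) (τ : V → V) : Prop := ∀ v, G.isP0 v = false → G.E v (τ v)

/-- Edges of the subgraph where player 0 follows `σ` (player 1 keeps all edges). -/
def E0 (G : PGame V) (σ : V → V) (v w : V) : Prop :=
  if G.isP0 v then w = σ v else G.E v w

/-- Edges of the subgraph where player 1 follows `τ` (player 0 keeps all edges). -/
def E1 (G : PGame V) (τ : V → V) (v w : V) : Prop :=
  if G.isP0 v then G.E v w else w = τ v

/-- A cycle of length `k` (given by a `k`-periodic sequence) in the relation `R`. -/
def IsCycle (R : V → V → Prop) (k : ℕ) (c : ℕ → V) : Prop :=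
  0 < k ∧ (∀ i, R (c i) (c (i + 1))) ∧ ∀ i, c (i + k) = c i

/-- The highest priority occurring on the (periodic) cycle `c` is even. -/
def TopEven (G : PGame V) (c : ℕ → V) : Prop :=
  ∃ i, Even (G.p (c i)) ∧ ∀ j, G.p (c j) ≤ G.p (c i)

/-- The highest priority occurring on the (periodic) cycle `c` is odd. -/
def TopOdd (G : PGame V) (c : ℕ → V) : Prop :=
  ∃ i, Odd (G.p (c i)) ∧ ∀ j, G.p (c j) ≤ G.p (c i)

/-- `σ` is an admissible player 0 strategy: valid, and every cycle avoiding the sink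
in the subgraph where player 0 follows `σ` has even highest priority. -/
def Admissible0 (G : PGame V) (top : V) (σ : V → V) : Prop :=
  G.Strat0Valid σ ∧ ∀ k c, IsCycle (G.E0 σ) k c → (∀ i, c i ≠ top) → G.TopEven c

/-- `τ` is an admissible player 1 strategy. -/
def Admissible1 (G : PGame V) (top : V) (τ : V → V) : Prop :=
  G.Strat1Valid τ ∧ ∀ k c, IsCycle (G.E1 τ) k c → (∀ i, c i ≠ top) → G.TopOdd c

/-- `top` is a sink node: unique smallest priority and only the self-loop as outgoing edge. -/
def IsSink (G : PGame V) (top : V) : Prop :=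
  (∀ v, v ≠ top → G.p top < G.p v) ∧ (∀ w, G.E top w ↔ w = top)

/-- A sink parity game. -/
def IsSinkGame (G : PGame V) (top : V) : Prop :=
  G.IsSink top ∧ (∃ σ, G.Admissible0 top σ) ∧ (∃ τ, G.Admissible1 top τ)

/-- One move when both players play their positional strategies. -/
def step (G : PGame V) (σ τ : V → V) (v : V) : V := if G.isP0 v then σ v else τ v

/-- The play from `v` under the strategies `σ`, `τ`. -/
def play (G : PGame V) (σ τ : V → V) (v : V) (n : ℕ) : V := (G.step σ τ)^[n] v

end PGame

/-- Edges of the extended game `G'`: original edges, an edge from every player 0 node to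
the sink `⊤` (encoded `Sum.inr false`), from every player 1 node to `w` (encoded
`Sum.inr true`), from `w` to `⊤`, and the self-loop at `⊤`. -/
def extE {V : Type} (G : PGame V) : (V ⊕ Bool) → (V ⊕ Bool) → Prop
  | Sum.inl v, Sum.inl u => G.E v u
  | Sum.inl v, Sum.inr b => (G.isP0 v = true ∧ b = false) ∨ (G.isP0 v = false ∧ b = true)
  | Sum.inr _, u => u = Sum.inr false

/-- The extended game `G'` built from `G` by adding the sink `⊤` (priority `pt`, smaller
than all others) and the node `w` (even priority `pw`, larger than all others). -/
def extG {V : Type} (G : PGame V) (pw pt : ℤ) : PGame (V ⊕ Bool) where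
  E := extE G
  isP0 := fun v => match v with | Sum.inl u => G.isP0 u | Sum.inr b => !b
  p := fun v => match v with | Sum.inl u => G.p u | Sum.inr b => if b then pw else pt

/-- If `G` has no cycle lying entirely within `V₀` or entirely within `V₁`, then the
extended game `G'` is a sink parity game: `⊤` is a sink node, the all-to-`⊤` strategy is
admissible for player 0, and the all-to-`w` strategy is admissible for player 1. -/
theorem stmt17 {V : Type} (G : PGame V) (pw pt : ℤ)
    (hEven : Even pw) (hpt : ∀ v, pt < G.p v) (hpw : ∀ v, G.p v < pw) (hptw : pt < pw)
    (hcyc : ∀ k c, PGame.IsCycle G.E k c →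
      (∃ i, G.isP0 (c i) = true) ∧ (∃ i, G.isP0 (c i) = false)) :
    (extG G pw pt).IsSink (Sum.inr false) ∧
    (extG G pw pt).Admissible0 (Sum.inr false) (fun _ => Sum.inr false) ∧
    (extG G pw pt).Admissible1 (Sum.inr false)
      (fun v => match v with | Sum.inl _ => Sum.inr true | Sum.inr _ => Sum.inr false) ∧
    (extG G pw pt).IsSinkGame (Sum.inr false) := by
  have hsink : (extG G pw pt).IsSink (Sum.inr false) := by
    constructor
    · intro v hv
      match v with
      | Sum.inl u => simpa [extG] using hpt u
      | Sum.inr true => simpa [extG] using hptw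
      | Sum.inr false => exact absurd rfl hv
    · intro u
      constructor <;> intro h <;> exact h
  have hA0 : (extG G pw pt).Admissible0 (Sum.inr false) (fun _ => Sum.inr false) := by
    constructor
    · intro v hv
      match v, hv with
      | Sum.inl u, hv => exact Or.inl ⟨hv, rfl⟩
      | Sum.inr false, _ => rfl
      | Sum.inr true, hv => simp [extG] at hv
    · intro k c hc htop
      exfalso
      obtain ⟨hk, hE, hper⟩ := hc
      have hnt : ∀ i, c i ≠ Sum.inr true := by
        intro i hi
        have := hE i
        rw [PGame.E0, hi] at this
        simp only [extG, extE] at this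
        exact htop (i + 1) this
      have hall : ∀ i, ∃ v, c i = Sum.inl v ∧ G.isP0 v = false := by
        intro i
        match hi : c i with
        | Sum.inr false => exact absurd hi (htop i)
        | Sum.inr true => exact absurd hi (hnt i)
        | Sum.inl v =>
          refine ⟨v, rfl, ?_⟩
          by_contra hv
          have hv : G.isP0 v = true := by simpa using hv
          have := hE i
          rw [PGame.E0, hi] at this
          simp only [extG, hv, if_true] at this
          exact htop (i + 1) this
      set c' : ℕ → V := fun i => (hall i).choose with hc'
      have hcl : ∀ i, c i = Sum.inl (c' i) := fun i => (hall i).choose_spec.1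
      have hcp : ∀ i, G.isP0 (c' i) = false := fun i => (hall i).choose_spec.2
      have hcycG : PGame.IsCycle G.E k c' := by
        refine ⟨hk, fun i => ?_, fun i => ?_⟩
        · have := hE i
          rw [PGame.E0, hcl i, hcl (i + 1)] at this
          have h1 : (extG G pw pt).isP0 (Sum.inl (c' i)) = false := hcp i
          rw [h1] at this
          simpa [extG, extE] using this
        · have := hper i
          rw [hcl i, hcl (i + k)] at this
          exact Sum.inl.injEq _ _ ▸ this
      obtain ⟨i, hi⟩ := (hcyc k c' hcycG).1
      exact absurd hi (by simp [hcp i])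
  have hA1 : (extG G pw pt).Admissible1 (Sum.inr false)
      (fun v => match v with | Sum.inl _ => Sum.inr true | Sum.inr _ => Sum.inr false) := by
    constructor
    · intro v hv
      match v, hv with
      | Sum.inl u, hv => exact Or.inr ⟨hv, rfl⟩
      | Sum.inr true, _ => rfl
      | Sum.inr false, hv => simp [extG] at hv
    · intro k c hc htop
      exfalso
      obtain ⟨hk, hE, hper⟩ := hc
      have hnt : ∀ i, c i ≠ Sum.inr true := by
        intro i hi
        have := hE i
        rw [PGame.E1, hi] at this
        simp only [extG] at this
        exact htop (i + 1) this
      have hall : ∀ i, ∃ v, c i = Sum.inl v ∧ G.isP0 v = true := by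
        intro i
        match hi : c i with
        | Sum.inr false => exact absurd hi (htop i)
        | Sum.inr true => exact absurd hi (hnt i)
        | Sum.inl v =>
          refine ⟨v, rfl, ?_⟩
          by_contra hv
          have hv : G.isP0 v = false := by simpa using hv
          have := hE i
          rw [PGame.E1, hi] at this
          have h1 : (extG G pw pt).isP0 (Sum.inl v) = false := hv
          rw [h1] at this
          exact hnt (i + 1) (by simpa using this)
      set c' : ℕ → V := fun i => (hall i).choose with hc'
      have hcl : ∀ i, c i = Sum.inl (c' i) := fun i => (hall i).choose_spec.1
      have hcp : ∀ i, G.isP0 (c' i) = true := fun i => (hall i).choose_spec.2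
      have hcycG : PGame.IsCycle G.E k c' := by
        refine ⟨hk, fun i => ?_, fun i => ?_⟩
        · have := hE i
          rw [PGame.E1, hcl i, hcl (i + 1)] at this
          simp only [extG, hcp i, if_true] at this
          exact this
        · have := hper i
          rw [hcl i, hcl (i + k)] at this
          exact Sum.inl.injEq _ _ ▸ this
      obtain ⟨i, hi⟩ := (hcyc k c' hcycG).2
      exact absurd hi (by simp [hcp i])
  exact ⟨hsink, hA0, hA1, hsink, ⟨_, hA0⟩, ⟨_, hA1⟩⟩
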